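/- The linear map A_z^{−2} ⊗ Z⟨e_z⟩ → A_z^{−1} given by u ⊗ v ↦ u ⧢ v is a bijection, where A_z^{−1} := A_z^{−2}·Z⟨e_z⟩ (concatenation span). -/

import Mathlib

open scoped BigOperators

/-- Letters: `0 ↦ e₀`, `1 ↦ e₁`, `2 ↦ e_z`. -/
abbrev Letter := Fin 3

/-- The free noncommutative ring `𝒜_z = ℤ⟨e₀, e₁, e_z⟩`. -/
abbrev Az := MonoidAlgebra ℤ (FreeMonoid Letter)

/-- The monomial (word) corresponding to a list of letters. -/
noncomputable def wordOf (l : List Letter) : Az :=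
  MonoidAlgebra.single (FreeMonoid.ofList l) 1

/-- The extended sequence `a₀ = 0, a₁, …, a_n, a_{n+1} = 1`. -/
def ext (a : List Letter) (j : ℕ) : Letter :=
  ((0 : Letter) :: a ++ [1]).getD j 1

/-- `∂_{α,β}` on a word. -/
noncomputable def Dword (α β : Letter) (a : List Letter) : Az :=
  ∑ i ∈ Finset.range a.length,
    (((if ({ext a (i + 1), ext a (i + 2)} : Finset Letter) = {α, β} then 1 else 0)
      - (if ({ext a i, ext a (i + 1)} : Finset Letter) = {α, β} then 1 else 0) : ℤ))
      • wordOf (a.eraseIdx i)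

/-- The linear operator `∂_{α,β} : 𝒜_z → 𝒜_z`. -/
noncomputable def del (α β : Letter) : Az →ₗ[ℤ] Az :=
  (Finsupp.lsum ℤ fun w => LinearMap.toSpanSingleton ℤ Az (Dword α β (FreeMonoid.toList w))) ∘ₗ (MonoidAlgebra.coeffLinearEquiv ℤ).toLinearMap

/-- The shuffle product of two words. -/
noncomputable def shuffleWord : List Letter → List Letter → Az
  | [], v => wordOf v
  | u, [] => wordOf u
  | a :: u, b :: v =>
      wordOf [a] * shuffleWord u (b :: v) + wordOf [b] * shuffleWord (a :: u) v
termination_by u v => u.length + v.length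

/-- The shuffle product as a bilinear map on `𝒜_z`. -/
noncomputable def sh : Az →ₗ[ℤ] Az →ₗ[ℤ] Az :=
  (Finsupp.lsum ℤ fun u => LinearMap.toSpanSingleton ℤ (Az →ₗ[ℤ] Az)
    ((Finsupp.lsum ℤ fun v =>
      LinearMap.toSpanSingleton ℤ Az (shuffleWord (FreeMonoid.toList u) (FreeMonoid.toList v))) ∘ₗ (MonoidAlgebra.coeffLinearEquiv ℤ).toLinearMap)) ∘ₗ (MonoidAlgebra.coeffLinearEquiv ℤ).toLinearMap

/-- The (generalized) stuffle product of two words (the left word should lie in `𝒜`). -/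
noncomputable def stWord : List Letter → List Letter → Az
  | [], v => wordOf v
  | u, [] => wordOf u
  | a :: u, b :: v =>
      if a = 0 then wordOf [0] * stWord u (b :: v)
      else if a = 1 then
        wordOf [b] * (stWord u (b :: v) + stWord (a :: u) v - wordOf [0] * stWord u v)
      else 0
termination_by u v => u.length + v.length

/-- The stuffle product as a bilinear map. -/
noncomputable def st : Az →ₗ[ℤ] Az →ₗ[ℤ] Az :=
  (Finsupp.lsum ℤ fun u => LinearMap.toSpanSingleton ℤ (Az →ₗ[ℤ] Az)
    ((Finsupp.lsum ℤ fun v =>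
      LinearMap.toSpanSingleton ℤ Az (stWord (FreeMonoid.toList u) (FreeMonoid.toList v))) ∘ₗ (MonoidAlgebra.coeffLinearEquiv ℤ).toLinearMap)) ∘ₗ (MonoidAlgebra.coeffLinearEquiv ℤ).toLinearMap

/-- `Const` kills every word containing the letter `e_z`. -/
noncomputable def Const : Az →ₗ[ℤ] Az :=
  (Finsupp.lsum ℤ fun w => LinearMap.toSpanSingleton ℤ Az
    (if (2 : Letter) ∈ FreeMonoid.toList w then 0 else wordOf (FreeMonoid.toList w))) ∘ₗ (MonoidAlgebra.coeffLinearEquiv ℤ).toLinearMap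

/-- `τ_z` on letters. -/
noncomputable def tauLetter (a : Letter) : Az :=
  if a = 0 then wordOf [2] - wordOf [1]
  else if a = 1 then wordOf [2] - wordOf [0]
  else wordOf [2]

/-- `τ_z` on a word (reversing the word). -/
noncomputable def tauWord : List Letter → Az
  | [] => 1
  | a :: u => tauWord u * tauLetter a

/-- The duality anti-automorphism `τ_z`. -/
noncomputable def tau : Az →ₗ[ℤ] Az :=
  (Finsupp.lsum ℤ fun w => LinearMap.toSpanSingleton ℤ Az (tauWord (FreeMonoid.toList w))) ∘ₗ (MonoidAlgebra.coeffLinearEquiv ℤ).toLinearMap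

/-- `𝒜_z^0`: span of the empty word and of words beginning with `e₁` or `e_z`
and ending in `e₀` or `e_z`. -/
noncomputable def Az0 : Submodule ℤ Az :=
  Submodule.span ℤ {x | ∃ l : List Letter,
    (l = [] ∨ (l.head? ≠ some 0 ∧ l.getLast? ≠ some 1)) ∧ x = wordOf l}

/-- `𝒜_z^1`: span of the empty word and of words beginning with `e₁` or `e_z`. -/
noncomputable def Az1 : Submodule ℤ Az :=
  Submodule.span ℤ {x | ∃ l : List Letter, l.head? ≠ some 0 ∧ x = wordOf l}

/-- `𝒜 = ℤ⟨e₀, e₁⟩` inside `𝒜_z`. -/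
noncomputable def Asub : Submodule ℤ Az :=
  Submodule.span ℤ {x | ∃ l : List Letter, (2 : Letter) ∉ l ∧ x = wordOf l}

/-- `𝒜^1 = ℤ ⊕ e₁𝒜`. -/
noncomputable def A1sub : Submodule ℤ Az :=
  Submodule.span ℤ {x | ∃ l : List Letter,
    ((2 : Letter) ∉ l ∧ l.head? ≠ some 0 ∧ l.head? ≠ some 2) ∧ x = wordOf l}

/-- `𝒜^0 = ℤ ⊕ e₁𝒜e₀`. -/
noncomputable def A0sub : Submodule ℤ Az :=
  Submodule.span ℤ {x | ∃ l : List Letter,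
    ((2 : Letter) ∉ l ∧ (l = [] ∨ (l.head? = some 1 ∧ l.getLast? = some 0))) ∧ x = wordOf l}

/-- `𝒜_z^{-2} = ℤ ⊕ e₁𝒜_z e₀ ⊕ e_z 𝒜_z e₀`. -/
noncomputable def Azm2 : Submodule ℤ Az :=
  Submodule.span ℤ {x | ∃ l : List Letter,
    (l = [] ∨ (l.head? ≠ some 0 ∧ l.getLast? = some 0)) ∧ x = wordOf l}

/-- `𝒜_z^0 ∩ ℤ⟨e₁, e_z⟩`. -/
noncomputable def Wsub : Submodule ℤ Az :=
  Submodule.span ℤ {x | ∃ l : List Letter,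
    ((0 : Letter) ∉ l ∧ (l = [] ∨ l.getLast? = some 2)) ∧ x = wordOf l}

/-- `ℤ⟨e_z⟩`: span of powers of `e_z`. -/
noncomputable def Zez : Submodule ℤ Az :=
  Submodule.span ℤ {x | ∃ k : ℕ, x = wordOf (List.replicate k 2)}

/-- `𝒜_z^{-1} = 𝒜_z^{-2}·ℤ⟨e_z⟩`. -/
noncomputable def Azm1 : Submodule ℤ Az :=
  Submodule.span ℤ {x | ∃ l : List Letter, ∃ k : ℕ,
    (l = [] ∨ (l.head? ≠ some 0 ∧ l.getLast? = some 0)) ∧ x = wordOf (l ++ List.replicate k 2)}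

/-- `ℤ⟨e₀, e_z⟩ ∩ 𝒜_z^0`. -/
noncomputable def Vsub : Submodule ℤ Az :=
  Submodule.span ℤ {x | ∃ l : List Letter,
    ((1 : Letter) ∉ l ∧ (l = [] ∨ l.head? = some 2)) ∧ x = wordOf l}

/-- All lists of length `r` with entries in `{e₀, e_z}`. -/
def tuples : ℕ → List (List Letter)
  | 0 => [[]]
  | n + 1 => (tuples n).flatMap fun t => [(0 : Letter) :: t, (2 : Letter) :: t]

/-- `∂_{1,b₁} ∘ ⋯ ∘ ∂_{1,b_r}` for `bs = [b₁, …, b_r]`. -/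
noncomputable def delChain : List Letter → Az →ₗ[ℤ] Az
  | [] => LinearMap.id
  | b :: bs => (del 1 b).comp (delChain bs)

/-- `∂_{z,α₁} ∘ ⋯ ∘ ∂_{z,α_r}` for `as = [α₁, …, α_r]`. -/
noncomputable def delZChain : List Letter → Az →ₗ[ℤ] Az
  | [] => LinearMap.id
  | a :: as => (del 2 a).comp (delZChain as)

/-- `φ_⧢` on a word. -/
noncomputable def phiShWord (l : List Letter) : Az :=
  ∑ r ∈ Finset.range (l.length + 1),
    ((tuples r).map fun b => sh (Const (delChain b (wordOf l))) (wordOf b)).sum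

/-- `φ_⧢ : 𝒜_z^0 → 𝒜_z^0` (defined on all of `𝒜_z`). -/
noncomputable def phiSh : Az →ₗ[ℤ] Az :=
  (Finsupp.lsum ℤ fun w => LinearMap.toSpanSingleton ℤ Az (phiShWord (FreeMonoid.toList w))) ∘ₗ (MonoidAlgebra.coeffLinearEquiv ℤ).toLinearMap

/-- `φ_*` on a word. -/
noncomputable def phiStWord (l : List Letter) : Az :=
  ∑ r ∈ Finset.range (l.length + 1),
    ((tuples r).map fun b => st (Const (delChain b (wordOf l))) (wordOf b)).sum

/-- `φ_* : 𝒜_z^0 → 𝒜_z^0` (defined on all of `𝒜_z`). -/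
noncomputable def phiSt : Az →ₗ[ℤ] Az :=
  (Finsupp.lsum ℤ fun w => LinearMap.toSpanSingleton ℤ Az (phiStWord (FreeMonoid.toList w))) ∘ₗ (MonoidAlgebra.coeffLinearEquiv ℤ).toLinearMap

/-- `φ_⊗` on a word. -/
noncomputable def phiTWord (l : List Letter) : TensorProduct ℤ Az Az :=
  ∑ r ∈ Finset.range (l.length + 1),
    ((tuples r).map fun b => (Const (delChain b (wordOf l))) ⊗ₜ[ℤ] (wordOf b)).sum

/-- `φ_⊗ : 𝒜_z^0 → 𝒜^0 ⊗ ℤ⟨e₀, e_z⟩` (defined on all of `𝒜_z`). -/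
noncomputable def phiT : Az →ₗ[ℤ] TensorProduct ℤ Az Az :=
  (Finsupp.lsum ℤ fun w => LinearMap.toSpanSingleton ℤ (TensorProduct ℤ Az Az)
    (phiTWord (FreeMonoid.toList w))) ∘ₗ (MonoidAlgebra.coeffLinearEquiv ℤ).toLinearMap

/-- The `i`-fold shuffle power of `e₁`. -/
noncomputable def e1pow : ℕ → Az
  | 0 => 1
  | n + 1 => sh (wordOf [1]) (e1pow n)

/-- Substitution `z → 1` on words. -/
noncomputable def subst1 : Az →ₗ[ℤ] Az :=
  (Finsupp.lsum ℤ fun w => LinearMap.toSpanSingleton ℤ Az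
    (wordOf ((FreeMonoid.toList w).map fun a => if a = 2 then 1 else a))) ∘ₗ (MonoidAlgebra.coeffLinearEquiv ℤ).toLinearMap

/-!
In a shuffle of a word `u ∈ 𝒜_z^{-2}` (which ends in `e₀`) with `e_z^k`, only `e_z`'s follow the
last letter of `u`, and all `k` of them do so only in the term `u e_z^k`. Hence `u ⧢ e_z^k` is
`u e_z^k` plus a combination of words `m e_z^j` with `j < k`, where `m` ends like `u` and begins
like `u` or with `e_z`, so that `m ∈ 𝒜_z^{-2}`. Thus the shuffle map is unitriangular from the
basis `u ⊗ e_z^k` of `𝒜_z^{-2} ⊗ ℤ⟨e_z⟩` to the family `u e_z^k`, graded by `k`. That family is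
linearly independent, since a word determines its tail of `e_z`'s, and a family unitriangular with
respect to a linearly independent one is linearly independent and spans the same submodule,
here `𝒜_z^{-1}`.
-/

open Module Set Submodule

section Unitriangular

variable {R M ι : Type*} [Ring R] [AddCommGroup M] [Module R M] {v w : ι → M} {r : ι → ℕ}

theorem span_image_lt_le_of_sub_mem
    (hvw : ∀ i, v i - w i ∈ span R (w '' {j | r j < r i})) (n : ℕ) :
    span R (v '' {i | r i < n}) ≤ span R (w '' {i | r i < n}) := by
  refine span_le.mpr ?_
  rintro _ ⟨i, hi, rfl⟩
  have hw : w i ∈ span R (w '' {i | r i < n}) := subset_span ⟨i, hi, rfl⟩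
  have hlow : span R (w '' {j | r j < r i}) ≤ span R (w '' {i | r i < n}) :=
    span_mono (Set.image_mono fun j (hj : r j < r i) => hj.trans hi)
  simpa using add_mem (hlow (hvw i)) hw

theorem span_image_lt_eq_of_sub_mem
    (hvw : ∀ i, v i - w i ∈ span R (w '' {j | r j < r i})) (n : ℕ) :
    span R (v '' {i | r i < n}) = span R (w '' {i | r i < n}) := by
  refine le_antisymm (span_image_lt_le_of_sub_mem hvw n) ?_
  induction n with
  | zero => simp
  | succ n ih =>
    refine span_le.mpr ?_
    rintro _ ⟨i, hi, rfl⟩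
    have hmono : span R (v '' {i | r i < n}) ≤ span R (v '' {i | r i < n + 1}) :=
      span_mono (Set.image_mono fun j (hj : r j < n) => hj.trans n.lt_succ_self)
    rcases Nat.lt_succ_iff_lt_or_eq.mp hi with hi | rfl
    · exact hmono (ih (subset_span ⟨i, hi, rfl⟩))
    · have hv : v i ∈ span R (v '' {j | r j < r i + 1}) := subset_span ⟨i, hi, rfl⟩
      simpa using sub_mem hv (hmono (ih (hvw i)))

theorem span_range_eq_of_sub_mem
    (hvw : ∀ i, v i - w i ∈ span R (w '' {j | r j < r i})) :
    span R (range v) = span R (range w) := by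
  refine le_antisymm (span_le.mpr ?_) (span_le.mpr ?_)
  · rintro _ ⟨i, rfl⟩
    have hw : w i ∈ span R (range w) := subset_span ⟨i, rfl⟩
    have hlow := span_mono (Set.image_subset_range w _) (hvw i)
    simpa using add_mem hlow hw
  · rintro _ ⟨i, rfl⟩
    have hw : w i ∈ span R (v '' {j | r j < r i + 1}) := by
      rw [span_image_lt_eq_of_sub_mem hvw]
      exact subset_span ⟨i, (r i).lt_succ_self, rfl⟩
    exact span_mono (Set.image_subset_range v _) hw

theorem linearCombination_sub_mem_span_image_lt
    (hvw : ∀ i, v i - w i ∈ span R (w '' {j | r j < r i})) {n : ℕ} {c : ι →₀ R}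
    (hc : c ∈ Finsupp.supported R R {i | r i = n}) :
    Finsupp.linearCombination R v c - Finsupp.linearCombination R w c
      ∈ span R (w '' {i | r i < n}) := by
  have hsub : Finsupp.linearCombination R v c - Finsupp.linearCombination R w c =
      Finsupp.linearCombination R (v - w) c := by
    simp [Finsupp.linearCombination_apply, Finsupp.sum_sub, smul_sub]
  rw [hsub]
  refine span_le.mpr ?_ ((Finsupp.mem_span_image_iff_linearCombination R).mpr ⟨c, hc, rfl⟩)
  rintro _ ⟨i, rfl, rfl⟩
  exact hvw i

theorem LinearIndependent.of_sub_mem_span_image_lt (hw : LinearIndependent R w)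
    (hvw : ∀ i, v i - w i ∈ span R (w '' {j | r j < r i})) : LinearIndependent R v := by
  classical
  set Lv := Finsupp.linearCombination R v
  set Lw := Finsupp.linearCombination R w
  suffices h : ∀ n, ∀ c ∈ Finsupp.supported R R {i | r i < n}, Lv c = 0 → c = 0 by
    refine linearIndependent_iff.mpr fun c hc => h (c.support.sup r + 1) c ?_ hc
    exact fun i hi => Nat.lt_succ_of_le (Finset.le_sup (f := r) hi)
  intro n
  induction n with
  | zero => simp [Finsupp.supported_empty]
  | succ n ih =>
    intro c hc hv
    set top := c.filter (fun i => r i = n)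
    set low := c.filter (fun i => r i ≠ n)
    have htop : top ∈ Finsupp.supported R R {i | r i = n} :=
      (Finsupp.mem_supported' R top).mpr fun i hi => Finsupp.filter_apply_neg _ _ hi
    have hlow : low ∈ Finsupp.supported R R {i | r i < n} := by
      refine (Finsupp.mem_supported' R low).mpr fun i hi => ?_
      by_cases hin : r i = n
      · simp [low, hin]
      · rw [Finsupp.filter_apply_pos (fun i => r i ≠ n) c hin]
        exact (Finsupp.mem_supported' R c).mp hc i (by simp at hi ⊢; omega)
    -- modulo the span of the `w i` of rank `< n`, `0 = Lv c` is congruent to `Lw top`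
    have hwtop : Lw top ∈ span R (w '' {i | r i < n}) := by
      have hvlow : Lv low ∈ span R (w '' {i | r i < n}) :=
        span_image_lt_le_of_sub_mem hvw n
          ((Finsupp.mem_span_image_iff_linearCombination R).mpr ⟨low, hlow, rfl⟩)
      have hsum : Lv top + Lv low = 0 := by rw [← map_add, Finsupp.filter_add_filter_not, hv]
      have : Lw top = -(Lv top - Lw top) - Lv low := by rw [← sub_eq_zero, ← hsum]; abel
      rw [this]
      exact sub_mem (neg_mem (linearCombination_sub_mem_span_image_lt hvw htop)) hvlow
    have htop0 : top = 0 := by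
      refine hw.finsuppLinearCombination_injective ?_
      rw [map_zero]
      refine disjoint_def.mp (hw.disjoint_span_image (s := {i | r i = n}) (t := {i | r i < n})
        (Set.disjoint_left.mpr fun i (hi : r i = n) (hi' : r i < n) => by omega)) _ ?_ hwtop
      exact (Finsupp.mem_span_image_iff_linearCombination R).mpr ⟨top, htop, rfl⟩
    have hc : c = low := by
      have hsplit : top + low = c := Finsupp.filter_add_filter_not c _
      rwa [htop0, zero_add, eq_comm] at hsplit
    rw [hc] at hv ⊢
    exact ih low hlow hv

end Unitriangular

theorem List.append_replicate_inj {α : Type*} {a : α} {l l' : List α} {j j' : ℕ}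
    (hl : l.getLast? ≠ some a) (hl' : l'.getLast? ≠ some a)
    (h : l ++ List.replicate j a = l' ++ List.replicate j' a) : l = l' ∧ j = j' := by
  induction j generalizing j' with
  | zero =>
    cases j' with
    | zero => simpa using h
    | succ j' =>
      rw [List.replicate_zero, List.append_nil] at h
      simp [h, List.getLast?_append, List.getLast?_replicate] at hl
  | succ j ih =>
    cases j' with
    | zero =>
      rw [List.replicate_zero, List.append_nil] at h
      simp [← h, List.getLast?_append, List.getLast?_replicate] at hl'
    | succ j' =>
      rw [List.replicate_succ', List.replicate_succ', ← List.append_assoc, ← List.append_assoc] at h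
      simpa using ih (List.append_cancel_right h)

namespace Module.Basis

variable {ι R M N : Type*} [CommSemiring R] [AddCommMonoid M] [Module R M] [AddCommMonoid N]
  [Module R N] (b : Basis ι R M) (f : M →ₗ[R] N)

theorem injective_of_linearIndependent_comp (h : LinearIndependent R (f ∘ b)) :
    Function.Injective f :=
  b.constr_self R f ▸ b.injective_constr_of_linearIndependent h

theorem range_eq_span_range_comp : LinearMap.range f = span R (range (f ∘ b)) := by
  rw [LinearMap.range_eq_map, ← b.span_eq, map_span, range_comp]

end Module.Basis

theorem wordOf_append (u v : List Letter) : wordOf (u ++ v) = wordOf u * wordOf v := by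
  simp [wordOf, MonoidAlgebra.single_mul_single, FreeMonoid.ofList_append]

theorem wordOf_cons (a : Letter) (l : List Letter) : wordOf (a :: l) = wordOf [a] * wordOf l :=
  wordOf_append [a] l

theorem sh_wordOf (u v : List Letter) : sh (wordOf u) (wordOf v) = shuffleWord u v := by
  simp [sh, wordOf, MonoidAlgebra.coeffLinearEquiv]

theorem shuffleWord_nil_left (v : List Letter) : shuffleWord [] v = wordOf v := by
  rw [shuffleWord]

theorem shuffleWord_nil_right (u : List Letter) : shuffleWord u [] = wordOf u := by
  cases u <;> simp [shuffleWord]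

theorem shuffleWord_cons_cons (a b : Letter) (u v : List Letter) :
    shuffleWord (a :: u) (b :: v)
      = wordOf [a] * shuffleWord u (b :: v) + wordOf [b] * shuffleWord (a :: u) v := by
  rw [shuffleWord]

theorem linearIndependent_wordOf {ι : Type*} {f : ι → List Letter} (hf : Function.Injective f) :
    LinearIndependent ℤ (fun i => wordOf (f i)) :=
  (MonoidAlgebra.basis (FreeMonoid Letter) ℤ).linearIndependent.comp _
    (FreeMonoid.ofList.injective.comp hf)

noncomputable def trailingSpan (P : List Letter → Prop) (k : ℕ) : Submodule ℤ Az :=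
  span ℤ {x | ∃ m j, P m ∧ j < k ∧ x = wordOf (m ++ List.replicate j 2)}

theorem wordOf_mem_trailingSpan {P : List Letter → Prop} {m : List Letter} {j k : ℕ}
    (hm : P m) (hj : j < k) : wordOf (m ++ List.replicate j 2) ∈ trailingSpan P k :=
  subset_span ⟨m, j, hm, hj, rfl⟩

theorem trailingSpan_mono {P Q : List Letter → Prop} {k k' : ℕ} (hPQ : ∀ m, P m → Q m)
    (hk : k ≤ k') : trailingSpan P k ≤ trailingSpan Q k' :=
  span_le.mpr fun _ ⟨m, _, hm, hj, hx⟩ =>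
    hx ▸ wordOf_mem_trailingSpan (hPQ m hm) (hj.trans_le hk)

theorem wordOf_singleton_mul_mem_trailingSpan {P Q : List Letter → Prop} {a : Letter} {k k' : ℕ}
    (hPQ : ∀ m, P m → Q (a :: m)) (hk : k ≤ k') {x : Az} (hx : x ∈ trailingSpan P k) :
    wordOf [a] * x ∈ trailingSpan Q k' := by
  refine (span_le (p := (trailingSpan Q k').comap (LinearMap.mulLeft ℤ (wordOf [a])))).mpr
    ?_ hx
  rintro _ ⟨m, j, hm, hj, rfl⟩
  simpa [← wordOf_append] using wordOf_mem_trailingSpan (hPQ m hm) (hj.trans_le hk)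

def ShuffleTail (l m : List Letter) : Prop :=
  m.getLast? = l.getLast? ∧ (m.head? = l.head? ∨ m.head? = some 2)

theorem ShuffleTail.cons_cons {a : Letter} {u m : List Letter} (h : ShuffleTail u m) :
    ShuffleTail (a :: u) (a :: m) := by
  simp [ShuffleTail, List.getLast?_cons, h.1]

theorem ShuffleTail.cons_two {a : Letter} {u m : List Letter} (h : ShuffleTail (a :: u) m) :
    ShuffleTail (a :: u) (2 :: m) := by
  obtain ⟨hlast, -⟩ := h
  simp only [ShuffleTail, List.getLast?_cons, List.head?_cons] at hlast ⊢
  simp [hlast]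

theorem shuffleWord_replicate_sub_mem (l : List Letter) (k : ℕ) :
    shuffleWord l (List.replicate k 2) - wordOf (l ++ List.replicate k 2)
      ∈ trailingSpan (ShuffleTail l) k := by
  induction l generalizing k with
  | nil => simp [shuffleWord_nil_left]
  | cons a u ihu =>
    induction k with
    | zero => simp [shuffleWord_nil_right]
    | succ k ihk =>
      have hsplit : shuffleWord (a :: u) (List.replicate (k + 1) 2)
            - wordOf (a :: u ++ List.replicate (k + 1) 2)
          = wordOf [a] * (shuffleWord u (List.replicate (k + 1) 2)
              - wordOf (u ++ List.replicate (k + 1) 2))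
            + wordOf [2] * (shuffleWord (a :: u) (List.replicate k 2)
              - wordOf (a :: u ++ List.replicate k 2))
            + wordOf ((2 :: a :: u) ++ List.replicate k 2) := by
        rw [List.replicate_succ, shuffleWord_cons_cons, ← List.replicate_succ]
        simp only [List.cons_append]
        rw [wordOf_cons a (u ++ _), wordOf_cons 2 (a :: (u ++ _)), mul_sub, mul_sub]
        abel
      have hlead : ShuffleTail (a :: u) (2 :: a :: u) := by simp [ShuffleTail, List.getLast?_cons]
      rw [hsplit]
      refine add_mem (add_mem ?_ ?_) (wordOf_mem_trailingSpan hlead k.lt_succ_self)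
      · exact wordOf_singleton_mul_mem_trailingSpan (fun _ => ShuffleTail.cons_cons) le_rfl
          (ihu (k + 1))
      · exact wordOf_singleton_mul_mem_trailingSpan (fun _ => ShuffleTail.cons_two) k.le_succ ihk

def IsAzm2Word (l : List Letter) : Prop :=
  l = [] ∨ (l.head? ≠ some 0 ∧ l.getLast? = some 0)

theorem IsAzm2Word.getLast?_ne {l : List Letter} (h : IsAzm2Word l) : l.getLast? ≠ some 2 := by
  rcases h with rfl | ⟨-, h⟩ <;> simp [*]

theorem IsAzm2Word.of_shuffleTail {l m : List Letter} (hl : IsAzm2Word l)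
    (hm : ShuffleTail l m) : IsAzm2Word m := by
  obtain ⟨hlast, hhead⟩ := hm
  rcases hl with rfl | ⟨hl0, hl⟩
  · exact Or.inl (List.getLast?_eq_none_iff.mp hlast)
  · refine Or.inr ⟨?_, hlast.trans hl⟩
    rcases hhead with h | h <;> simp [h, hl0]

theorem sh_wordOf_replicate_sub_mem {l : List Letter} (hl : IsAzm2Word l) (k : ℕ) :
    sh (wordOf l) (wordOf (List.replicate k 2)) - wordOf (l ++ List.replicate k 2)
      ∈ trailingSpan IsAzm2Word k := by
  rw [sh_wordOf]
  exact trailingSpan_mono (fun _ => hl.of_shuffleTail) le_rfl (shuffleWord_replicate_sub_mem l k)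

abbrev Azm2Word := {l : List Letter // IsAzm2Word l}

theorem Azm2_eq_span : Azm2 = span ℤ (range fun l : Azm2Word => wordOf l) := by
  rw [Azm2]
  congr 1
  ext x
  exact ⟨fun ⟨l, hl, hx⟩ => ⟨⟨l, hl⟩, hx.symm⟩, fun ⟨l, hx⟩ => ⟨l, l.2, hx.symm⟩⟩

theorem Zez_eq_span : Zez = span ℤ (range fun k => wordOf (List.replicate k 2)) := by
  rw [Zez]
  congr 1
  ext x
  exact ⟨fun ⟨k, hx⟩ => ⟨k, hx.symm⟩, fun ⟨k, hx⟩ => ⟨k, hx.symm⟩⟩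

noncomputable def azm2Basis : Basis Azm2Word ℤ Azm2 :=
  (Basis.span (linearIndependent_wordOf Subtype.val_injective)).map
    (LinearEquiv.ofEq _ _ Azm2_eq_span.symm)

noncomputable def zezBasis : Basis ℕ ℤ Zez :=
  (Basis.span (linearIndependent_wordOf (List.replicate_left_injective 2))).map
    (LinearEquiv.ofEq _ _ Zez_eq_span.symm)

theorem azm2Basis_apply (l : Azm2Word) : (azm2Basis l : Az) = wordOf l := by
  simp [azm2Basis]

theorem zezBasis_apply (k : ℕ) : (zezBasis k : Az) = wordOf (List.replicate k 2) := by
  simp [zezBasis]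

noncomputable def azm1Word (p : Azm2Word × ℕ) : Az := wordOf (p.1.1 ++ List.replicate p.2 2)

theorem Azm1_eq_span : Azm1 = span ℤ (range azm1Word) := by
  rw [Azm1]
  congr 1
  ext x
  exact ⟨fun ⟨l, k, hl, hx⟩ => ⟨(⟨l, hl⟩, k), hx.symm⟩,
    fun ⟨p, hx⟩ => ⟨p.1, p.2, p.1.2, hx.symm⟩⟩

theorem linearIndependent_azm1Word : LinearIndependent ℤ azm1Word := by
  refine linearIndependent_wordOf fun p q h => ?_
  obtain ⟨h1, h2⟩ := List.append_replicate_inj p.1.2.getLast?_ne q.1.2.getLast?_ne h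
  exact Prod.ext (Subtype.ext h1) h2

theorem trailingSpan_le_span_azm1Word (k : ℕ) :
    trailingSpan IsAzm2Word k ≤ span ℤ (azm1Word '' {p | p.2 < k}) :=
  span_le.mpr fun _ ⟨m, j, hm, hj, hx⟩ => subset_span ⟨(⟨m, hm⟩, j), hj, hx.symm⟩

/-- The shuffle map `𝒜_z^{-2} ⊗ ℤ⟨e_z⟩ → 𝒜_z^{-1}`, `u ⊗ v ↦ u ⧢ v`,
is a bijection onto `𝒜_z^{-1}`. -/
theorem stmt_11 :
    Function.Injective
      (TensorProduct.lift ((sh.comp Azm2.subtype).compl₂ Zez.subtype)) ∧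
    LinearMap.range
      (TensorProduct.lift ((sh.comp Azm2.subtype).compl₂ Zez.subtype)) = Azm1 := by
  set f := TensorProduct.lift ((sh.comp Azm2.subtype).compl₂ Zez.subtype)
  set b := azm2Basis.tensorProduct zezBasis
  have htri : ∀ p, (f ∘ b) p - azm1Word p ∈ span ℤ (azm1Word '' {q | q.2 < p.2}) := by
    rintro ⟨l, k⟩
    simpa [f, b, azm1Word, azm2Basis_apply, zezBasis_apply] using
      trailingSpan_le_span_azm1Word k (sh_wordOf_replicate_sub_mem l.2 k)
  exact ⟨b.injective_of_linearIndependent_comp f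
      (linearIndependent_azm1Word.of_sub_mem_span_image_lt htri),
    by rw [b.range_eq_span_range_comp, span_range_eq_of_sub_mem htri, Azm1_eq_span]⟩
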